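/- Let m ≥ 1 and g ≥ 1 be natural numbers. The set of tuples ω = (ω_0,…,ω_{2m+2g−2}) ∈ ℕ^{2m+2g−1} satisfying Σ_i ω_i = m and (ω_{2i}, ω_{2i+1}) ≠ (0,0) for all i < m has exactly 2^m elements; explicitly, its elements are the tuples in which each pair (ω_{2i}, ω_{2i+1}) for i < m is either (1,0) or (0,1) and all remaining entries are 0. In particular its cardinality is independent of g. -/

import Mathlib

/-- `Qdel m k N` is the set `Q_m^{δ^k}` of tuples `ω ∈ ℕ^N` whose entries sum to `m`
and such that for each `i < k` the pair `(ω_{2i}, ω_{2i+1})` is not `(0,0)`.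
(For `Q_m^{δ^k}(g)` take `N = 2k + 2g - 1`.) -/
def Qdel (m k N : ℕ) : Set (Fin N → ℕ) :=
  { ω | (∑ i, ω i) = m ∧
      ∀ i : ℕ, i < k → ∀ (h1 : 2 * i < N) (h2 : 2 * i + 1 < N),
        ¬(ω ⟨2 * i, h1⟩ = 0 ∧ ω ⟨2 * i + 1, h2⟩ = 0) }

/-!
Each of the `m` constrained pairs `(ω_{2i}, ω_{2i+1})` contributes at least `1` to a total of
`m`, so every such pair sums to exactly `1` and all other entries vanish. A pair of naturals
summing to `1` is `(1,0)` or `(0,1)`, i.e. a Boolean choice, whence the `2^m` tuples.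
-/

theorem Fintype.sum_add_sum_eq_card_iff {ι κ : Type*} [Fintype ι] [Fintype κ] {p : ι → ℕ}
    (c : κ → ℕ) (hp : ∀ i, 1 ≤ p i) :
    ∑ i, p i + ∑ k, c k = Fintype.card ι ↔ (∀ i, p i = 1) ∧ ∀ k, c k = 0 := by
  have hcard : Fintype.card ι = ∑ _i : ι, 1 := by simp
  have hle : ∑ _i : ι, 1 ≤ ∑ i, p i := Finset.sum_le_sum fun i _ => hp i
  constructor
  · intro h
    have hp_sum : ∑ _i : ι, 1 = ∑ i, p i := by omega
    have hc_sum : ∑ k, c k = 0 := by omega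
    rw [Finset.sum_eq_sum_iff_of_le fun i _ => hp i] at hp_sum
    rw [Finset.sum_eq_zero_iff] at hc_sum
    exact ⟨fun i => (hp_sum i (Finset.mem_univ i)).symm, fun k => hc_sum k (Finset.mem_univ k)⟩
  · rintro ⟨hp_one, hc_zero⟩
    simp [hp_one, hc_zero]

theorem Nat.add_eq_one_iff_exists_bool {a b : ℕ} :
    a + b = 1 ↔ ∃ e : Bool, (!e).toNat = a ∧ e.toNat = b := by
  rw [Nat.add_eq_one_iff, Bool.exists_bool, or_comm]
  simp [eq_comm]

def pairEquiv (m r : ℕ) : Fin m × Fin 2 ⊕ Fin r ≃ Fin (2 * m + r) :=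
  (Equiv.sumCongr (finProdFinEquiv.trans (finCongr (mul_comm m 2))) (Equiv.refl _)).trans
    finSumFinEquiv

def boolPairTuple (m r : ℕ) (ε : Fin m → Bool) : Fin (2 * m + r) → ℕ := fun j =>
  if h : (j : ℕ) < 2 * m then
    (if ε ⟨(j : ℕ) / 2, by omega⟩ = decide ((j : ℕ) % 2 = 1) then 1 else 0)
  else 0

section

variable {m r : ℕ}

@[simp]
theorem pairEquiv_inl_val (i : Fin m) (b : Fin 2) :
    (pairEquiv m r (.inl (i, b)) : ℕ) = 2 * i + b := by
  simp [pairEquiv, finProdFinEquiv, add_comm]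

@[simp]
theorem pairEquiv_inr_val (k : Fin r) : (pairEquiv m r (.inr k) : ℕ) = 2 * m + k := by
  simp [pairEquiv]

theorem mem_Qdel_iff {ω : Fin (2 * m + r) → ℕ} :
    ω ∈ Qdel m m (2 * m + r) ↔
      (∀ i, ω (pairEquiv m r (.inl (i, 0))) + ω (pairEquiv m r (.inl (i, 1))) = 1) ∧
        ∀ k, ω (pairEquiv m r (.inr k)) = 0 := by
  have hsum : ∑ j, ω j =
      ∑ i, (ω (pairEquiv m r (.inl (i, 0))) + ω (pairEquiv m r (.inl (i, 1)))) +
        ∑ k, ω (pairEquiv m r (.inr k)) := by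
    rw [← (pairEquiv m r).sum_comp, Fintype.sum_sum_type, Fintype.sum_prod_type]
    simp only [Fin.sum_univ_two]
  have hpair : (∀ i < m, ∀ (h1 : 2 * i < 2 * m + r) (h2 : 2 * i + 1 < 2 * m + r),
      ¬(ω ⟨2 * i, h1⟩ = 0 ∧ ω ⟨2 * i + 1, h2⟩ = 0)) ↔
      ∀ i, 1 ≤ ω (pairEquiv m r (.inl (i, 0))) + ω (pairEquiv m r (.inl (i, 1))) := by
    have h0 (i : Fin m) : pairEquiv m r (.inl (i, 0)) = ⟨2 * i, by omega⟩ := Fin.ext (by simp)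
    have h1 (i : Fin m) : pairEquiv m r (.inl (i, 1)) = ⟨2 * i + 1, by omega⟩ :=
      Fin.ext (by simp)
    simp only [h0, h1, Fin.forall_iff, Nat.one_le_iff_ne_zero, ne_eq, Nat.add_eq_zero_iff]
    exact ⟨fun h i hi => h i hi _ _, fun h i hi _ _ => h i hi⟩
  constructor
  · rintro ⟨hω_sum, hω_pair⟩
    exact (Fintype.sum_add_sum_eq_card_iff _ (hpair.1 hω_pair)).1
      (by rwa [Fintype.card_fin, ← hsum])
  · rintro ⟨hpair_one, htail_zero⟩
    exact ⟨by simp [hsum, hpair_one, htail_zero], hpair.2 fun i => (hpair_one i).ge⟩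

@[simp]
theorem boolPairTuple_pairEquiv_inl_zero (ε : Fin m → Bool) (i : Fin m) :
    boolPairTuple m r ε (pairEquiv m r (.inl (i, 0))) = (!ε i).toNat := by
  have hmk (h : 2 * (i : ℕ) / 2 < m) : (⟨2 * (i : ℕ) / 2, h⟩ : Fin m) = i :=
    Fin.ext (by simp only; omega)
  simp only [boolPairTuple, pairEquiv_inl_val, Fin.val_zero, add_zero, hmk,
    dif_pos (by omega : 2 * (i : ℕ) < 2 * m)]
  cases ε i <;> simp

@[simp]
theorem boolPairTuple_pairEquiv_inl_one (ε : Fin m → Bool) (i : Fin m) :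
    boolPairTuple m r ε (pairEquiv m r (.inl (i, 1))) = (ε i).toNat := by
  have hmk (h : (2 * (i : ℕ) + 1) / 2 < m) : (⟨(2 * (i : ℕ) + 1) / 2, h⟩ : Fin m) = i :=
    Fin.ext (by simp only; omega)
  simp only [boolPairTuple, pairEquiv_inl_val, Fin.val_one, hmk,
    dif_pos (by omega : 2 * (i : ℕ) + 1 < 2 * m)]
  cases ε i <;> simp

@[simp]
theorem boolPairTuple_pairEquiv_inr (ε : Fin m → Bool) (k : Fin r) :
    boolPairTuple m r ε (pairEquiv m r (.inr k)) = 0 := by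
  simp [boolPairTuple]

theorem boolPairTuple_injective : Function.Injective (boolPairTuple m r) := by
  intro ε ε' h
  funext i
  have hi := congrFun h (pairEquiv m r (.inl (i, 1)))
  simp only [boolPairTuple_pairEquiv_inl_one] at hi
  exact Function.LeftInverse.injective Bool.ofNat_toNat hi

theorem mem_range_boolPairTuple_iff {ω : Fin (2 * m + r) → ℕ} :
    ω ∈ Set.range (boolPairTuple m r) ↔
      (∀ i, ω (pairEquiv m r (.inl (i, 0))) + ω (pairEquiv m r (.inl (i, 1))) = 1) ∧
        ∀ k, ω (pairEquiv m r (.inr k)) = 0 := by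
  simp only [Set.mem_range, funext_iff, ← (pairEquiv m r).forall_congr_right, Sum.forall,
    Prod.forall, Fin.forall_fin_two, boolPairTuple_pairEquiv_inl_zero,
    boolPairTuple_pairEquiv_inl_one, boolPairTuple_pairEquiv_inr,
    Nat.add_eq_one_iff_exists_bool, Classical.skolem, exists_and_right, eq_comm (a := 0)]

theorem Qdel_eq_range_boolPairTuple : Qdel m m (2 * m + r) = Set.range (boolPairTuple m r) := by
  ext ω
  rw [mem_Qdel_iff, mem_range_boolPairTuple_iff]

end

theorem stmt_14 (m g' : ℕ) :
    Qdel m m (2 * m + (2 * g' + 1))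
      = Set.range (fun ε : Fin m → Bool =>
          fun j : Fin (2 * m + (2 * g' + 1)) =>
            if h : (j : ℕ) < 2 * m then
              (if ε ⟨(j : ℕ) / 2, by omega⟩ = decide ((j : ℕ) % 2 = 1) then 1 else 0)
            else 0) ∧
    Nat.card ↥(Qdel m m (2 * m + (2 * g' + 1))) = 2 ^ m := by
  refine ⟨Qdel_eq_range_boolPairTuple, ?_⟩
  rw [Qdel_eq_range_boolPairTuple, Nat.card_range_of_injective boolPairTuple_injective]
  simp
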